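/- If g : ℝ → ℂ is C^p, T-periodic, and h = T/N for a positive integer N, then the periodic trapezoidal rule error satisfies | ∑_{n=1}^{N} g(nh)·h − ∫_0^T g(x) dx | ≤ C · N^{−p}, where C depends only on g and p. -/

import Mathlib

/-!
Substituting `x = h s` turns the error into `h` times the unit-step error
`∑_{n=1}^N f n - ∫₀ᴺ f` of the `N`-periodic function `f s = g (h s)`. Integrating by parts on each
cell `[n, n + 1]` against `B₁(s - n)` rewrites that error, by periodicity, as `∫₀ᴺ B₁({s}) f'(s) ds`; since
`B_k(0) = B_k(1)` for `k ≥ 2`, each further integration by parts against `B_k` only produces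
boundary terms that telescope to a multiple of `f⁽ᵏ⁾(N) - f⁽ᵏ⁾(0) = 0`. This leaves
`±(1/p!) ∫₀ᴺ B_p({s}) f⁽ᵖ⁾(s) ds = O(N h^p)` because `f⁽ᵖ⁾ = h^p g⁽ᵖ⁾(h ·)`, and the factor `h`
makes the error `O(h^p) = O(N^(-p))`.
-/

open Finset Set intervalIntegral
open scoped Nat

theorem Function.Periodic.iteratedDeriv {𝕜 F : Type*} [NontriviallyNormedField 𝕜]
    [NormedAddCommGroup F] [NormedSpace 𝕜 F] {f : 𝕜 → F} {c : 𝕜}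
    (hf : Function.Periodic f c) (n : ℕ) : Function.Periodic (iteratedDeriv n f) c := by
  intro x
  simpa only [funext hf] using (congrFun (iteratedDeriv_comp_add_const n f c) x).symm

section EulerMaclaurin

variable {E : Type*} [NormedAddCommGroup E] [NormedSpace ℝ E]

/-- `∫₀ᴺ B_k({s}) f(s) ds`, written cell by cell so that no periodized Bernoulli function is
needed. -/
noncomputable def eulerMaclaurinRemainder (k : ℕ) (f : ℝ → E) (N : ℕ) : E :=
  ∑ n ∈ range N, ∫ u in (0:ℝ)..1, bernoulliFun k u • f (n + u)

theorem eulerMaclaurinRemainder_zero {f : ℝ → E} (hf : Continuous f) (N : ℕ) :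
    eulerMaclaurinRemainder 0 f N = ∫ x in (0:ℝ)..N, f x := by
  have hcell : ∀ n : ℕ, ∫ u in (0:ℝ)..1, bernoulliFun 0 u • f (n + u)
      = ∫ x in (n:ℝ)..(n + 1 : ℕ), f x := by
    intro n
    simp only [bernoulliFun_zero, one_smul, integral_comp_add_left, add_zero, Nat.cast_succ]
  simp only [eulerMaclaurinRemainder, hcell]
  simpa using sum_integral_adjacent_intervals (a := fun n : ℕ => (n : ℝ))
    (μ := MeasureTheory.volume) (fun n _ => hf.intervalIntegrable _ _)

theorem norm_eulerMaclaurinRemainder_le {k : ℕ} {f : ℝ → E} {N : ℕ} {M B : ℝ}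
    (hM : ∀ u ∈ Icc (0:ℝ) 1, |bernoulliFun k u| ≤ M) (hB : ∀ x ∈ Icc (0:ℝ) N, ‖f x‖ ≤ B) :
    ‖eulerMaclaurinRemainder k f N‖ ≤ N * (M * B) := by
  have hM0 : 0 ≤ M := (abs_nonneg _).trans (hM 0 ⟨le_rfl, zero_le_one⟩)
  have hcell : ∀ n ∈ range N, ‖∫ u in (0:ℝ)..1, bernoulliFun k u • f (n + u)‖ ≤ M * B := by
    intro n hn
    have hnN : (n : ℝ) + 1 ≤ N := by exact_mod_cast mem_range.1 hn
    simpa using norm_integral_le_of_norm_le_const (a := 0) (b := 1) fun u hu => by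
      rw [uIoc_of_le zero_le_one] at hu
      rw [norm_smul, Real.norm_eq_abs]
      exact mul_le_mul (hM u (Ioc_subset_Icc_self hu))
        (hB _ ⟨by positivity [hu.1.le], by linarith [hu.2]⟩) (norm_nonneg _) hM0
  simpa [eulerMaclaurinRemainder] using norm_sum_le_of_le _ hcell

variable [CompleteSpace E]

theorem smul_integral_bernoulliFun_smul_comp_add {ψ ψ' : ℝ → E}
    (hψ : ∀ x, HasDerivAt ψ (ψ' x) x) (hψ' : Continuous ψ') (k : ℕ) (a : ℝ) :
    (k + 1 : ℝ) • ∫ u in (0:ℝ)..1, bernoulliFun k u • ψ (a + u) =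
      bernoulliFun (k + 1) 1 • ψ (a + 1) - bernoulliFun (k + 1) 0 • ψ a
        - ∫ u in (0:ℝ)..1, bernoulliFun (k + 1) u • ψ' (a + u) := by
  have hshift : ∀ u, HasDerivAt (fun u => ψ (a + u)) (ψ' (a + u)) u := fun u =>
    (hψ (a + u)).comp_const_add a u
  have hB : ∀ u, HasDerivAt (bernoulliFun (k + 1)) ((k + 1 : ℝ) * bernoulliFun k u) u := by
    intro u
    simpa using hasDerivAt_bernoulliFun (k + 1) u
  rw [integral_smul_deriv_eq_deriv_smul (fun u _ => hB u) (fun u _ => hshift u)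
    ((by fun_prop : Continuous _).intervalIntegrable _ _)
    ((hψ'.comp (continuous_const_add a)).intervalIntegrable _ _), add_zero, sub_sub_cancel,
    ← integral_smul]
  simp only [smul_smul]

theorem smul_eulerMaclaurinRemainder {ψ ψ' : ℝ → E}
    (hψ : ∀ x, HasDerivAt ψ (ψ' x) x) (hψ' : Continuous ψ') (k N : ℕ) :
    (k + 1 : ℝ) • eulerMaclaurinRemainder k ψ N =
      ∑ n ∈ range N, (bernoulliFun (k + 1) 1 • ψ (n + 1) - bernoulliFun (k + 1) 0 • ψ n)
        - eulerMaclaurinRemainder (k + 1) ψ' N := by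
  simp only [eulerMaclaurinRemainder, smul_sum,
    smul_integral_bernoulliFun_smul_comp_add hψ hψ', sum_sub_distrib]

theorem smul_eulerMaclaurinRemainder_of_ne_zero {ψ ψ' : ℝ → E}
    (hψ : ∀ x, HasDerivAt ψ (ψ' x) x) (hψ' : Continuous ψ') {k : ℕ} (hk : k ≠ 0) (N : ℕ) :
    (k + 1 : ℝ) • eulerMaclaurinRemainder k ψ N =
      bernoulliFun (k + 1) 0 • (ψ N - ψ 0) - eulerMaclaurinRemainder (k + 1) ψ' N := by
  have htel : ∑ n ∈ range N, (ψ (n + 1) - ψ n) = ψ N - ψ 0 := by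
    simpa using sum_range_sub (fun n : ℕ => ψ n) N
  rw [smul_eulerMaclaurinRemainder hψ hψ', bernoulliFun_endpoints_eq_of_ne_one (by omega),
    ← htel, smul_sum]
  simp only [smul_sub]

theorem sum_Icc_sub_integral_eq_eulerMaclaurinRemainder_one {ψ ψ' : ℝ → E}
    (hψ : ∀ x, HasDerivAt ψ (ψ' x) x) (hψ' : Continuous ψ') (N : ℕ) :
    ∑ n ∈ Icc 1 N, ψ n - ∫ x in (0:ℝ)..N, ψ x
      = (2:ℝ)⁻¹ • (ψ N - ψ 0) + eulerMaclaurinRemainder 1 ψ' N := by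
  have h := smul_eulerMaclaurinRemainder hψ hψ' 0 N
  rw [Nat.cast_zero, zero_add, one_smul, eulerMaclaurinRemainder_zero
    (continuous_iff_continuousAt.2 fun x => (hψ x).continuousAt)] at h
  have htel : ∑ n ∈ range N, (ψ (n + 1) - ψ n) = ψ N - ψ 0 := by
    simpa using sum_range_sub (fun n : ℕ => ψ n) N
  have hshift : ∑ n ∈ Icc 1 N, ψ n = ∑ n ∈ range N, ψ ((n + 1 : ℕ) : ℝ) := by
    rw [range_eq_Ico, sum_Ico_add' (fun n : ℕ => ψ n) 0 N 1, zero_add,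
      ← Finset.Ico_succ_right_eq_Icc, Nat.succ_eq_succ, Nat.succ_eq_add_one]
  have hcells : ∑ n ∈ Icc 1 N, ψ n
      - ∑ n ∈ range N, (bernoulliFun 1 1 • ψ (n + 1) - bernoulliFun 1 0 • ψ n)
      = ∑ n ∈ range N, (2:ℝ)⁻¹ • (ψ (n + 1) - ψ n) := by
    rw [hshift, ← sum_sub_distrib]
    refine sum_congr rfl fun n _ => ?_
    simp only [bernoulliFun_one, Nat.cast_succ]
    module
  rw [h, zero_add, ← htel, smul_sum, ← hcells]
  abel

theorem sum_Icc_sub_integral_eq_eulerMaclaurinRemainder {k : ℕ} (hk : k ≠ 0) {f : ℝ → E}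
    (hf : ContDiff ℝ k f) {N : ℕ} (hend : ∀ j < k, iteratedDeriv j f N = iteratedDeriv j f 0) :
    ∑ n ∈ Icc 1 N, f n - ∫ x in (0:ℝ)..N, f x
      = ((-1) ^ (k + 1) / k ! : ℝ) • eulerMaclaurinRemainder k (iteratedDeriv k f) N := by
  have hderiv : ∀ j < k, ∀ x, HasDerivAt (iteratedDeriv j f) (iteratedDeriv (j + 1) f x) x :=
    fun j hj x => by
      rw [iteratedDeriv_succ]
      exact (hf.differentiable_iteratedDeriv j (by exact_mod_cast hj) x).hasDerivAt
  have hcont : ∀ j ≤ k, Continuous (iteratedDeriv j f) := fun j hj =>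
    hf.continuous_iteratedDeriv j (by exact_mod_cast hj)
  induction k, Nat.one_le_iff_ne_zero.2 hk using Nat.le_induction with
  | base =>
    simpa [hend 0 one_pos] using
      sum_Icc_sub_integral_eq_eulerMaclaurinRemainder_one (hderiv 0 one_pos) (hcont 1 le_rfl) N
  | succ k hk ih =>
    rw [ih (by omega) (hf.of_le (by exact_mod_cast k.le_succ)) (fun j hj => hend j (by omega))
      (fun j hj => hderiv j (by omega)) (fun j hj => hcont j (by omega))]
    have hstep := smul_eulerMaclaurinRemainder_of_ne_zero (hderiv k k.lt_succ_self)
      (hcont (k + 1) le_rfl) (by omega : k ≠ 0) N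
    rw [hend k k.lt_succ_self, sub_self, smul_zero, zero_sub] at hstep
    rw [← inv_smul_smul₀ (by positivity : (k + 1 : ℝ) ≠ 0) (eulerMaclaurinRemainder k _ N), hstep,
      smul_neg, ← neg_smul, smul_smul, Nat.factorial_succ]
    congr 1
    push_cast
    field_simp
    ring

theorem exists_norm_sum_Icc_sub_integral_le (p : ℕ) :
    ∃ K : ℝ, ∀ (f : ℝ → E) (N : ℕ) (B : ℝ), ContDiff ℝ p f →
      (∀ j < p, iteratedDeriv j f N = iteratedDeriv j f 0) →
      (∀ x ∈ Icc (0:ℝ) N, ‖iteratedDeriv p f x‖ ≤ B) →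
      ‖∑ n ∈ Icc 1 N, f n - ∫ x in (0:ℝ)..N, f x‖ ≤ K * N * B := by
  rcases Nat.eq_zero_or_pos p with rfl | hp
  · refine ⟨2, fun f N B _ _ hB => ?_⟩
    simp only [iteratedDeriv_zero] at hB
    have hsum : ‖∑ n ∈ Icc 1 N, f n‖ ≤ N * B := by
      simpa using norm_sum_le_of_le (Icc 1 N) fun n hn =>
        hB n ⟨Nat.cast_nonneg n, by exact_mod_cast (mem_Icc.1 hn).2⟩
    have hint : ‖∫ x in (0:ℝ)..N, f x‖ ≤ N * B := by
      simpa [mul_comm] using norm_integral_le_of_norm_le_const (a := 0) (b := N) fun x hx =>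
        hB x (Ioc_subset_Icc_self (by rwa [uIoc_of_le (Nat.cast_nonneg _)] at hx))
    linarith [norm_sub_le (∑ n ∈ Icc 1 N, f n) (∫ x in (0:ℝ)..N, f x)]
  · obtain ⟨M, hM⟩ := isCompact_Icc.exists_bound_of_continuousOn
      (continuous_bernoulliFun p).continuousOn (s := Icc (0:ℝ) 1)
    refine ⟨M / p !, fun f N B hf hend hB => ?_⟩
    rw [sum_Icc_sub_integral_eq_eulerMaclaurinRemainder hp.ne' hf hend, norm_smul]
    calc ‖((-1) ^ (p + 1) / p ! : ℝ)‖ * ‖eulerMaclaurinRemainder p (iteratedDeriv p f) N‖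
        ≤ (1 / p !) * (N * (M * B)) := by
          gcongr
          · simp
          · exact norm_eulerMaclaurinRemainder_le (fun u hu => by simpa using hM u hu) hB
      _ = M / p ! * N * B := by ring

end EulerMaclaurin

/-- Periodic trapezoidal rule: for a `C^p`, `T`-periodic function `g` and `h = T/N`,
`|∑_{n=1}^N g(nh) h - ∫_0^T g| ≤ C N^{-p}` with `C` depending only on `g` and `p`. -/
theorem periodic_trapezoidal_rule_error
    (T : ℝ) (hT : 0 < T) (p : ℕ) (g : ℝ → ℂ)
    (hg : ContDiff ℝ p g) (hper : Function.Periodic g T) :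
    ∃ C : ℝ, ∀ N : ℕ, 0 < N →
      ‖(∑ n ∈ Finset.Icc 1 N, g ((n : ℝ) * (T / N)) * ((T : ℂ) / N))
          - ∫ x in (0:ℝ)..T, g x‖ ≤ C / (N : ℝ) ^ p := by
  obtain ⟨K, hK⟩ := exists_norm_sum_Icc_sub_integral_le (E := ℂ) p
  obtain ⟨B, hB⟩ := isBounded_iff_forall_norm_le.1 ((hper.iteratedDeriv p).isBounded_of_continuous
    hT.ne' (hg.continuous_iteratedDeriv p le_rfl))
  refine ⟨K * T ^ (p + 1) * B, fun N hN => ?_⟩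
  set h : ℝ := T / N with h_def
  have hh : 0 < h := by positivity
  have hhN : h * N = T := div_mul_cancel₀ T (by positivity)
  have hscale : (∑ n ∈ Icc 1 N, g (n * h) * ((T : ℂ) / N)) - ∫ x in (0:ℝ)..T, g x
      = h • (∑ n ∈ Icc 1 N, g (h * n) - ∫ s in (0:ℝ)..N, g (h * s)) := by
    rw [smul_sub, smul_sum, integral_comp_mul_left _ hh.ne', smul_inv_smul₀ hh.ne', mul_zero, hhN]
    refine congrArg (· - _) (sum_congr rfl fun n _ => ?_)
    rw [Complex.real_smul, mul_comm, mul_comm (n : ℝ), h_def]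
    push_cast
    rfl
  have hfper : Function.Periodic (fun s => g (h * s)) N := by
    simpa only [← hhN, inv_mul_cancel_left₀ hh.ne'] using hper.const_mul h
  have hbound : ∀ x ∈ Icc (0:ℝ) N, ‖iteratedDeriv p (fun s => g (h * s)) x‖ ≤ h ^ p * B := by
    intro x _
    rw [iteratedDeriv_comp_const_smul hg h, norm_smul, norm_pow, Real.norm_of_nonneg hh.le]
    gcongr
    exact hB _ (mem_range_self _)
  have hE := hK (fun s => g (h * s)) N (h ^ p * B) (hg.comp (contDiff_const.mul contDiff_id))
    (fun j _ => by simpa using (hfper.iteratedDeriv j) 0) hbound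
  rw [hscale, norm_smul, Real.norm_of_nonneg hh.le]
  calc h * ‖∑ n ∈ Icc 1 N, g (h * n) - ∫ s in (0:ℝ)..N, g (h * s)‖
      ≤ h * (K * N * (h ^ p * B)) := mul_le_mul_of_nonneg_left hE hh.le
    _ = K * (h * N) * h ^ p * B := by ring
    _ = K * T ^ (p + 1) * B / (N : ℝ) ^ p := by rw [hhN, h_def, div_pow]; ring
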